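/- arXiv:1412.1565 — 3 statements merged into one kernel-verified Lean document; each statement's English description precedes it below -/
import Mathlib

section
/- If a matrix A ∈ ℝ^{m×N} does not satisfy the weighted null space property w-NSP(k,s,C) for any C < 1, then there exists a k-sparse vector x with support T and a support estimate set T̃ with |(T̃ ∩ Tᶜ) ∪ (T̃ᶜ ∩ T)| ≤ s such that x is not the unique minimizer of the weighted ℓ1 minimization problem min ∑ wᵢ|zᵢ| subject to Az = Ax, where wᵢ = w on T̃ and wᵢ = 1 off T̃. -/
open Finset

/-- ℓ1 norm of the restriction of `h` to the index set `T`. -/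
def l1 {N : ℕ} (h : Fin N → ℝ) (T : Finset (Fin N)) : ℝ := ∑ i ∈ T, |h i|

/-- The weighted null space property w-NSP(k,s,C). -/
def WNSP {m N : ℕ} (A : Matrix (Fin m) (Fin N) ℝ) (w : ℝ) (k s : ℕ) (C : ℝ) : Prop :=
  ∀ h : Fin N → ℝ, A.mulVec h = 0 →
    ∀ T S : Finset (Fin N), T.card ≤ k → S.card ≤ s →
      w * l1 h T + (1 - w) * l1 h S ≤ C * l1 h Tᶜ

/-- The weighted ℓ1 objective with weight `w` on the support estimate `Ttil`. -/
def wObj {N : ℕ} (w : ℝ) (Ttil : Finset (Fin N)) (z : Fin N → ℝ) : ℝ :=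
  w * l1 z Ttil + l1 z Ttilᶜ

/-- `x` is the unique minimizer of the weighted ℓ1 problem with measurements `A x`. -/
def UniqueMin {m N : ℕ} (A : Matrix (Fin m) (Fin N) ℝ) (w : ℝ) (Ttil : Finset (Fin N))
    (x : Fin N → ℝ) : Prop :=
  ∀ z : Fin N → ℝ, A.mulVec z = A.mulVec x → z ≠ x → wObj w Ttil x < wObj w Ttil z

/-- The support of a vector as a finset. -/
noncomputable def supp {N : ℕ} (x : Fin N → ℝ) : Finset (Fin N) := Finset.univ.filter (fun i => x i ≠ 0)

lemma l1_nonneg {N : ℕ} (h : Fin N → ℝ) (T : Finset (Fin N)) : 0 ≤ l1 h T :=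
  Finset.sum_nonneg fun _ _ => abs_nonneg _

lemma l1_mono {N : ℕ} (h : Fin N → ℝ) {T T' : Finset (Fin N)} (hT : T ⊆ T') :
    l1 h T ≤ l1 h T' :=
  Finset.sum_le_sum_of_subset_of_nonneg hT (fun _ _ _ => abs_nonneg _)

lemma l1_split {N : ℕ} (h : Fin N → ℝ) (U V : Finset (Fin N)) :
    l1 h U = l1 h (U ∩ V) + l1 h (U \ V) :=
  (Finset.sum_inter_add_sum_sdiff U V _).symm

lemma continuous_l1 {N : ℕ} (T : Finset (Fin N)) : Continuous (fun h : Fin N → ℝ => l1 h T) :=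
  continuous_finset_sum _ fun i _ => continuous_abs.comp (continuous_apply i)

lemma key_lemma {m N : ℕ} (A : Matrix (Fin m) (Fin N) ℝ) (w : ℝ) (hw0 : 0 ≤ w) (hw1 : w ≤ 1)
    (k s : ℕ) (hA : ∀ C : ℝ, C < 1 → ¬ WNSP A w k s C) :
    ∃ (h : Fin N → ℝ) (T S : Finset (Fin N)), A.mulVec h = 0 ∧ l1 h univ = 1 ∧
      T.card ≤ k ∧ S.card ≤ s ∧ l1 h Tᶜ ≤ w * l1 h T + (1 - w) * l1 h S := by
  have H : ∀ n : ℕ, ∃ (p : Finset (Fin N) × Finset (Fin N)) (h : Fin N → ℝ),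
      A.mulVec h = 0 ∧ l1 h univ = 1 ∧ p.1.card ≤ k ∧ p.2.card ≤ s ∧
      (1 - 1 / (n + 1)) * l1 h p.1ᶜ < w * l1 h p.1 + (1 - w) * l1 h p.2 := by
    intro n
    have hpos1 : (0:ℝ) < 1 / (n+1) := by positivity
    have hle1 : (1:ℝ) / (n+1) ≤ 1 := by
      rw [div_le_one (by positivity)]
      have : (0:ℝ) ≤ (n:ℝ) := Nat.cast_nonneg n
      linarith
    have hC1 : (1 : ℝ) - 1 / (n + 1) < 1 := by linarith
    have hC0 : (0 : ℝ) ≤ 1 - 1 / (n + 1) := by linarith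
    have hneg := hA _ hC1
    rw [WNSP] at hneg
    push_neg at hneg
    obtain ⟨h, hker, T, S, hT, hS, hlt⟩ := hneg
    have hpos : 0 < l1 h univ := by
      have h1 : 0 ≤ (1 - 1/((n:ℝ)+1)) * l1 h Tᶜ := mul_nonneg hC0 (l1_nonneg _ _)
      have h2 : l1 h T ≤ l1 h univ := l1_mono h (subset_univ _)
      have h3 : l1 h S ≤ l1 h univ := l1_mono h (subset_univ _)
      nlinarith [l1_nonneg h T, l1_nonneg h S]
    set c := (l1 h univ)⁻¹ with hc
    have hcpos : 0 < c := inv_pos.mpr hpos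
    have hsc : ∀ U : Finset (Fin N), l1 (c • h) U = c * l1 h U := by
      intro U
      unfold l1
      rw [Finset.mul_sum]
      exact Finset.sum_congr rfl fun i _ => by
        simp [abs_mul, abs_of_nonneg hcpos.le]
    refine ⟨(T, S), c • h, by rw [A.mulVec_smul, hker]; simp, ?_, hT, hS, ?_⟩
    · rw [hsc]; exact inv_mul_cancel₀ hpos.ne'
    · simp only [hsc]
      calc (1 - 1/((n:ℝ)+1)) * (c * l1 h Tᶜ) = c * ((1-1/((n:ℝ)+1)) * l1 h Tᶜ) := by ring
        _ < c * (w * l1 h T + (1 - w) * l1 h S) := mul_lt_mul_of_pos_left hlt hcpos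
        _ = w * (c * l1 h T) + (1 - w) * (c * l1 h S) := by ring
  choose p hp using H
  obtain ⟨q, hq⟩ := Finite.exists_infinite_fiber p
  have hq' : (p ⁻¹' {q}).Infinite := Set.infinite_coe_iff.mp hq
  obtain ⟨n₀, hn₀⟩ := hq'.nonempty
  have hpn₀ : p n₀ = q := hn₀
  obtain ⟨h₀', h₀'1, h₀'2, hTk, hSs, -⟩ := hp n₀
  rw [hpn₀] at hTk hSs
  -- approximation property for the fixed pair q
  have Happ : ∀ n : ℕ, ∃ h : Fin N → ℝ, A.mulVec h = 0 ∧ l1 h univ = 1 ∧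
      (1 - 1/((n:ℝ)+1)) * l1 h q.1ᶜ < w * l1 h q.1 + (1 - w) * l1 h q.2 := by
    intro n
    obtain ⟨n', hn'mem, hnn'⟩ := hq'.exists_gt n
    have hpn' : p n' = q := hn'mem
    obtain ⟨h, h1, h2, -, -, h5⟩ := hp n'
    rw [hpn'] at h5
    refine ⟨h, h1, h2, lt_of_le_of_lt ?_ h5⟩
    apply mul_le_mul_of_nonneg_right _ (l1_nonneg _ _)
    have hd : (1:ℝ)/((n':ℝ)+1) ≤ 1/((n:ℝ)+1) := by
      apply one_div_le_one_div_of_le (by positivity)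
      have : (n:ℝ) ≤ (n':ℝ) := by exact_mod_cast hnn'.le
      linarith
    linarith
  -- compactness
  set K : Set (Fin N → ℝ) := {h | A.mulVec h = 0} ∩ {h | l1 h univ = 1} with hKdef
  have hmulcont : Continuous (fun h : Fin N → ℝ => A.mulVec h) := by
    have he : (fun h : Fin N → ℝ => A.mulVec h) = fun h j => ∑ i, A j i * h i := by
      funext h j
      simp [Matrix.mulVec, dotProduct]
    rw [he]
    exact continuous_pi fun j => continuous_finset_sum _ fun i _ =>
      continuous_const.mul (continuous_apply i)
  have hKc : IsCompact K := by
    apply Metric.isCompact_of_isClosed_isBounded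
    · exact (isClosed_eq hmulcont continuous_const).inter
        (isClosed_eq (continuous_l1 univ) continuous_const)
    · apply Bornology.IsBounded.subset (Metric.isBounded_closedBall (x := (0 : Fin N → ℝ)) (r := 1))
      rintro h ⟨-, h2⟩
      rw [Metric.mem_closedBall, dist_zero_right, pi_norm_le_iff_of_nonneg zero_le_one]
      intro i
      rw [Real.norm_eq_abs]
      calc |h i| ≤ l1 h univ :=
            Finset.single_le_sum (f := fun i => |h i|) (fun j _ => abs_nonneg _) (mem_univ i)
        _ = 1 := h2
  have hKne : K.Nonempty := ⟨h₀', h₀'1, h₀'2⟩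
  have hgcont : Continuous (fun h : Fin N → ℝ =>
      w * l1 h q.1 + (1 - w) * l1 h q.2 - l1 h q.1ᶜ) :=
    (((continuous_const.mul (continuous_l1 _)).add
      (continuous_const.mul (continuous_l1 _))).sub (continuous_l1 _))
  obtain ⟨h₀, hh₀K, hmax⟩ := hKc.exists_isMaxOn hKne hgcont.continuousOn
  refine ⟨h₀, q.1, q.2, hh₀K.1, hh₀K.2, hTk, hSs, ?_⟩
  by_contra hlt
  push_neg at hlt
  have hε : (0:ℝ) < l1 h₀ q.1ᶜ - (w * l1 h₀ q.1 + (1 - w) * l1 h₀ q.2) := by linarith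
  obtain ⟨n, hn⟩ := exists_nat_one_div_lt hε
  obtain ⟨h, hk1, hk2, hk3⟩ := Happ n
  have hmem : h ∈ K := ⟨hk1, hk2⟩
  have hmx := hmax hmem
  simp only [Set.mem_setOf_eq] at hmx
  have hle1 : l1 h q.1ᶜ ≤ 1 := by rw [← hk2]; exact l1_mono h (subset_univ _)
  have hpos1 : (0:ℝ) < 1 / ((n:ℝ)+1) := by positivity
  nlinarith [l1_nonneg h q.1ᶜ]

lemma supp_mem {N : ℕ} (x : Fin N → ℝ) (i : Fin N) : i ∈ supp x ↔ x i ≠ 0 := by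
  simp [supp]

theorem stmt0 {m N : ℕ} (A : Matrix (Fin m) (Fin N) ℝ) (w : ℝ) (hw0 : 0 ≤ w) (hw1 : w ≤ 1)
    (k s : ℕ) (hA : ∀ C : ℝ, C < 1 → ¬ WNSP A w k s C) :
    ∃ (x : Fin N → ℝ) (Ttil : Finset (Fin N)),
      (supp x).card ≤ k ∧
      ((Ttil ∩ (supp x)ᶜ) ∪ (Ttilᶜ ∩ supp x)).card ≤ s ∧
      ¬ UniqueMin A w Ttil x := by
  obtain ⟨h, T, S, hker, hnorm, hTk, hSs, hkey⟩ := key_lemma A w hw0 hw1 k s hA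
  set x : Fin N → ℝ := fun i => if i ∈ T then h i else 0 with hxdef
  set T' : Finset (Fin N) := supp x with hT'def
  have hxT : ∀ i ∈ T, x i = h i := fun i hi => by simp [hxdef, hi]
  have hxTc : ∀ i ∉ T, x i = 0 := fun i hi => by simp [hxdef, hi]
  have hT'sub : T' ⊆ T := by
    intro i hi
    rw [hT'def, supp_mem] at hi
    by_contra hiT
    exact hi (hxTc i hiT)
  have hzero : ∀ i ∈ T, i ∉ T' → h i = 0 := by
    intro i hiT hiT'
    rw [hT'def, supp_mem, not_not] at hiT'
    rw [← hxT i hiT]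
    exact hiT'
  set Ttil : Finset (Fin N) := (T' \ S) ∪ (S \ T') with hTtil
  -- l1 of x restricted to any set
  have hA1 : ∀ U : Finset (Fin N), l1 x U = l1 h (U ∩ T') := by
    intro U
    unfold l1
    rw [← Finset.sum_subset (inter_subset_left : U ∩ T' ⊆ U)]
    · refine Finset.sum_congr rfl fun i hi => ?_
      rw [hxT i (hT'sub (mem_of_mem_inter_right hi))]
    · intro i hiU hiI
      have hnT' : i ∉ T' := fun h' => hiI (mem_inter.mpr ⟨hiU, h'⟩)
      rw [hT'def, supp_mem, not_not] at hnT'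
      simp [hnT']
  -- l1 of z = x - h restricted to any set
  have hA2 : ∀ U : Finset (Fin N), l1 (x - h) U = l1 h (U ∩ Tᶜ) := by
    intro U
    unfold l1
    rw [← Finset.sum_subset (inter_subset_left : U ∩ Tᶜ ⊆ U)]
    · refine Finset.sum_congr rfl fun i hi => ?_
      have hiT : i ∉ T := by simpa using mem_of_mem_inter_right hi
      simp [hxTc i hiT, abs_sub_comm]
    · intro i hiU hiI
      have hiT : i ∈ T := by
        by_contra hiT
        exact hiI (mem_inter.mpr ⟨hiU, by simpa using hiT⟩)
      simp [hxT i hiT]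
  -- set identities
  have e1 : Ttil ∩ T' = T' \ S := by
    ext i
    simp only [hTtil, mem_inter, mem_union, mem_sdiff]
    tauto
  have e2 : Ttilᶜ ∩ T' = T' ∩ S := by
    ext i
    simp only [hTtil, mem_inter, mem_compl, mem_union, mem_sdiff]
    tauto
  have e3 : Ttil ∩ Tᶜ = S ∩ Tᶜ := by
    ext i
    have hst : i ∈ T' → i ∈ T := fun h' => hT'sub h'
    simp only [hTtil, mem_inter, mem_compl, mem_union, mem_sdiff]
    tauto
  have e4 : Ttilᶜ ∩ Tᶜ = Tᶜ \ S := by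
    ext i
    have hst : i ∈ T' → i ∈ T := fun h' => hT'sub h'
    simp only [hTtil, mem_inter, mem_compl, mem_union, mem_sdiff]
    tauto
  -- decompositions of the key inequality
  have dT : l1 h T = l1 h (T' \ S) + l1 h (T' ∩ S) := by
    have hTT' : l1 h T = l1 h T' := by
      unfold l1
      rw [← Finset.sum_subset hT'sub]
      intro i hiT hiT'
      simp [hzero i hiT hiT']
    rw [hTT', l1_split h T' S, inter_comm]
    ring
  have dS : l1 h S = l1 h (T' ∩ S) + l1 h (S ∩ Tᶜ) := by
    rw [l1_split h S T]
    congr 1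
    · unfold l1
      rw [← Finset.sum_subset (show S ∩ T' ⊆ S ∩ T from inter_subset_inter (Finset.Subset.refl S) hT'sub)]
      · rw [inter_comm]
      · intro i hi hni
        have hiT : i ∈ T := mem_of_mem_inter_right hi
        have hiT' : i ∉ T' := fun h' => hni (mem_inter.mpr ⟨mem_of_mem_inter_left hi, h'⟩)
        simp [hzero i hiT hiT']
    · congr 1
      ext i
      simp [mem_sdiff, mem_inter, mem_compl]
  have dTc : l1 h Tᶜ = l1 h (S ∩ Tᶜ) + l1 h (Tᶜ \ S) := by
    rw [l1_split h Tᶜ S, inter_comm]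
  -- the alternative minimizer
  set z : Fin N → ℝ := x - h with hzdef
  have hAz : A.mulVec z = A.mulVec x := by
    rw [hzdef, A.mulVec_sub, hker, sub_zero]
  have hzx : z ≠ x := by
    intro hzx
    have hh0 : h = 0 := by
      have := sub_eq_self.mp hzx
      exact this
    rw [hh0] at hnorm
    simp [l1] at hnorm
  have hwObjx : wObj w Ttil x = w * l1 h (T' \ S) + l1 h (T' ∩ S) := by
    rw [wObj, hA1, hA1, e1, e2]
  have hwObjz : wObj w Ttil z = w * l1 h (S ∩ Tᶜ) + l1 h (Tᶜ \ S) := by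
    rw [wObj, hA2, hA2, e3, e4]
  have hineq : wObj w Ttil z ≤ wObj w Ttil x := by
    rw [hwObjx, hwObjz]
    rw [dT, dS, dTc] at hkey
    nlinarith [hkey]
  refine ⟨x, Ttil, ?_, ?_, ?_⟩
  · exact le_trans (card_le_card hT'sub) hTk
  · have hset : (Ttil ∩ T'ᶜ) ∪ (Ttilᶜ ∩ T') = S := by
      ext i
      simp only [hTtil, mem_union, mem_inter, mem_compl, mem_sdiff]
      tauto
    rw [← hT'def, hset]
    exact hSs
  · intro hu
    have := hu z hAz hzx
    linarith
end

section
/- Suppose A satisfies the standard null space properties 1-NSP(s,s,C_s) with C_s < 1, 1-NSP(k−s,k−s,C_{k−s}) and 1-NSP(k,k,C_k) for some finite constants C_{k−s}, C_k, and that C_s·C_{k−s} < 1. Then A satisfies the weighted null space property w-NSP(k,s,C(w)) with constant C(w) = ((1+w)·C_s·C_{k−s} + C_s + w·C_{k−s}) / (1 − C_s·C_{k−s}). -/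
open Finset

theorem stmt3 {m N : ℕ} (A : Matrix (Fin m) (Fin N) ℝ) (w : ℝ) (hw0 : 0 ≤ w) (hw1 : w ≤ 1)
    (k s : ℕ) (hsk : s ≤ k) (Cs Cks Ck : ℝ)
    (hCs0 : 0 ≤ Cs) (hCks0 : 0 ≤ Cks) (hCk0 : 0 ≤ Ck)
    (hCs : Cs < 1) (hprod : Cs * Cks < 1)
    (h1 : WNSP A 1 s s Cs) (h2 : WNSP A 1 (k - s) (k - s) Cks) (h3 : WNSP A 1 k k Ck) :
    WNSP A w k s (((1 + w) * Cs * Cks + Cs + w * Cks) / (1 - Cs * Cks)) := by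
  intro h hker T S hT hS
  obtain ⟨T₁, hT₁sub, hT₁card⟩ :=
    Finset.exists_subset_card_eq (min_le_right s T.card)
  set T₂ : Finset (Fin N) := T \ T₁ with hT₂def
  have hT₁s : T₁.card ≤ s := by rw [hT₁card]; exact min_le_left _ _
  have hT₂ks : T₂.card ≤ k - s := by
    have hc : T₂.card = T.card - T₁.card := Finset.card_sdiff_of_subset hT₁sub
    rw [hc, hT₁card]
    omega
  have e1 := h1 h hker T₁ T₁ hT₁s hT₁s
  have e2 := h2 h hker T₂ T₂ hT₂ks hT₂ks
  have e3 := h1 h hker S S hS hS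
  simp only [one_mul, sub_self, zero_mul, add_zero] at e1 e2 e3
  -- nonnegativity
  have n0 : ∀ U : Finset (Fin N), 0 ≤ l1 h U := fun U =>
    Finset.sum_nonneg fun i _ => abs_nonneg _
  -- decompositions
  have dT : l1 h T = l1 h T₁ + l1 h T₂ := by
    rw [l1, l1, l1, ← Finset.sum_union (Finset.disjoint_sdiff)]
    congr 1
    rw [Finset.union_sdiff_of_subset hT₁sub]
  have dT1 : l1 h T₁ᶜ = l1 h T₂ + l1 h Tᶜ := by
    rw [l1, l1, l1, ← Finset.sum_union]
    · congr 1
      ext i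
      simp only [Finset.mem_compl, Finset.mem_union, Finset.mem_sdiff, hT₂def]
      by_cases hi : i ∈ T
      · simp [hi]
      · have : i ∉ T₁ := fun hc => hi (hT₁sub hc)
        simp [hi, this]
    · rw [Finset.disjoint_right]
      intro i hi
      simp only [Finset.mem_compl] at hi
      simp only [hT₂def, Finset.mem_sdiff]
      tauto
  have dT2 : l1 h T₂ᶜ = l1 h T₁ + l1 h Tᶜ := by
    rw [l1, l1, l1, ← Finset.sum_union]
    · congr 1
      ext i
      simp only [Finset.mem_compl, Finset.mem_union, hT₂def, Finset.mem_sdiff]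
      by_cases hi : i ∈ T
      · simp [hi]
      · have : i ∉ T₁ := fun hc => hi (hT₁sub hc)
        simp [hi, this]
    · rw [Finset.disjoint_right]
      intro i hi
      simp only [Finset.mem_compl] at hi
      intro hc
      exact hi (hT₁sub hc)
  have dS : l1 h Sᶜ = l1 h T₁ + l1 h T₂ + l1 h Tᶜ - l1 h S := by
    have huniv : l1 h S + l1 h Sᶜ = l1 h T + l1 h Tᶜ := by
      rw [l1, l1, l1, l1, ← Finset.sum_union (disjoint_compl_right),
        ← Finset.sum_union (disjoint_compl_right)]
      rw [Finset.union_compl, Finset.union_compl]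
    have := dT
    linarith
  rw [dT1] at e1
  rw [dT2] at e2
  rw [dS] at e3
  have hD : (0:ℝ) < 1 - Cs * Cks := by linarith
  -- key intermediate bounds
  have ht1 : (1 - Cs * Cks) * l1 h T₁ ≤ Cs * (1 + Cks) * l1 h Tᶜ := by nlinarith [n0 T₁, n0 T₂, n0 Tᶜ]
  have ht2 : (1 - Cs * Cks) * l1 h T₂ ≤ Cks * (1 + Cs) * l1 h Tᶜ := by nlinarith [n0 T₁, n0 T₂, n0 Tᶜ]
  have hσ : (1 - Cs * Cks) * l1 h S ≤ Cs * (1 + Cks) * l1 h Tᶜ := by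
    have hkey : (1 + Cs) * ((1 - Cs * Cks) * l1 h S) ≤ (1 + Cs) * (Cs * (1 + Cks) * l1 h Tᶜ) := by
      nlinarith [n0 S, n0 Tᶜ, mul_le_mul_of_nonneg_left ht1 hCs0,
        mul_le_mul_of_nonneg_left ht2 hCs0]
    have h1Cs : (0:ℝ) < 1 + Cs := by linarith
    exact le_of_mul_le_mul_left hkey h1Cs
  rw [dT, div_mul_eq_mul_div, le_div_iff₀ hD]
  have hw1' : (0:ℝ) ≤ 1 - w := by linarith
  nlinarith [mul_le_mul_of_nonneg_left ht1 hw0, mul_le_mul_of_nonneg_left ht2 hw0,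
    mul_le_mul_of_nonneg_left hσ hw1']
end

section
/- Let w ∈ [0,1], t ≥ 0, C > 0, and let T, T̃ ⊆ {1,…,N}. Define the cone H := {h ∈ ℝ^N : hᵢ ≥ 0 for all i, and w‖h_T‖₁ + (1−w)‖h_{(T∩T̃ᶜ)∪(Tᶜ∩T̃)}‖₁ ≥ C‖h_{Tᶜ}‖₁}. Then every vector z ∈ ℝ^N with z_i = wt for i ∈ T∩T̃, z_i = t for i ∈ T∩T̃ᶜ, z_i = (1−w)t for i ∈ Tᶜ∩T̃, and z_i ≥ −Ct for i ∈ Tᶜ∩T̃ᶜ, belongs to the dual cone of H, i.e., ⟨z, h⟩ ≥ 0 for all h ∈ H. -/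
open Finset

theorem stmt16 {N : ℕ} (w t C : ℝ) (hw0 : 0 ≤ w) (hw1 : w ≤ 1) (ht : 0 ≤ t) (hC : 0 < C)
    (T Ttil : Finset (Fin N)) (z : Fin N → ℝ)
    (hz1 : ∀ i ∈ T ∩ Ttil, z i = w * t)
    (hz2 : ∀ i ∈ T ∩ Ttilᶜ, z i = t)
    (hz3 : ∀ i ∈ Tᶜ ∩ Ttil, z i = (1 - w) * t)
    (hz4 : ∀ i ∈ Tᶜ ∩ Ttilᶜ, z i ≥ -(C * t)) :
    ∀ h : Fin N → ℝ, (∀ i, 0 ≤ h i) →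
      w * l1 h T + (1 - w) * l1 h ((T ∩ Ttilᶜ) ∪ (Tᶜ ∩ Ttil)) ≥ C * l1 h Tᶜ →
      0 ≤ ∑ i, z i * h i := by
  intro h hpos hcone
  classical
  have habs : ∀ S : Finset (Fin N), l1 h S = ∑ i ∈ S, h i := fun S =>
    Finset.sum_congr rfl fun i _ => abs_of_nonneg (hpos i)
  have hsplit : ∀ (S : Finset (Fin N)) (f : Fin N → ℝ),
      ∑ i ∈ S, f i = ∑ i ∈ S ∩ Ttil, f i + ∑ i ∈ S ∩ Ttilᶜ, f i := by
    intro S f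
    rw [← Finset.sum_filter_add_sum_filter_not S (· ∈ Ttil) f]
    congr 1 <;> apply Finset.sum_congr _ (fun _ _ => rfl) <;> ext i <;>
      simp [Finset.mem_filter, Finset.mem_inter, and_comm]
  set SA := ∑ i ∈ T ∩ Ttil, h i with hSA
  set SB := ∑ i ∈ T ∩ Ttilᶜ, h i with hSB
  set SD := ∑ i ∈ Tᶜ ∩ Ttil, h i with hSD
  set SE := ∑ i ∈ Tᶜ ∩ Ttilᶜ, h i with hSE
  have hdisj : Disjoint (T ∩ Ttilᶜ) (Tᶜ ∩ Ttil) := by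
    apply Finset.disjoint_left.mpr
    intro i hi hi2
    simp only [Finset.mem_inter, Finset.mem_compl] at hi hi2
    exact hi2.1 hi.1
  have hcone' : w * (SA + SB) + (1 - w) * (SB + SD) ≥ C * (SD + SE) := by
    have e1 : l1 h T = SA + SB := by rw [habs, hsplit T h]
    have e2 : l1 h Tᶜ = SD + SE := by rw [habs, hsplit Tᶜ h]
    have e3 : l1 h ((T ∩ Ttilᶜ) ∪ (Tᶜ ∩ Ttil)) = SB + SD := by
      rw [habs, Finset.sum_union hdisj]
    rw [e1, e2, e3] at hcone
    exact hcone
  have hsum : ∑ i, z i * h i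
      = w * t * SA + t * SB + (1 - w) * t * SD + ∑ i ∈ Tᶜ ∩ Ttilᶜ, z i * h i := by
    rw [← Finset.sum_add_sum_compl T (fun i => z i * h i),
      hsplit T (fun i => z i * h i), hsplit Tᶜ (fun i => z i * h i)]
    have eA : ∑ i ∈ T ∩ Ttil, z i * h i = w * t * SA := by
      rw [hSA, Finset.mul_sum]
      exact Finset.sum_congr rfl fun i hi => by rw [hz1 i hi]
    have eB : ∑ i ∈ T ∩ Ttilᶜ, z i * h i = t * SB := by
      rw [hSB, Finset.mul_sum]
      exact Finset.sum_congr rfl fun i hi => by rw [hz2 i hi]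
    have eD : ∑ i ∈ Tᶜ ∩ Ttil, z i * h i = (1 - w) * t * SD := by
      rw [hSD, Finset.mul_sum]
      exact Finset.sum_congr rfl fun i hi => by rw [hz3 i hi]
    rw [eA, eB, eD]; ring
  have hE : ∑ i ∈ Tᶜ ∩ Ttilᶜ, z i * h i ≥ -(C * t) * SE := by
    rw [hSE, Finset.mul_sum]
    exact Finset.sum_le_sum fun i hi =>
      mul_le_mul_of_nonneg_right (hz4 i hi) (hpos i)
  have hSApos : 0 ≤ SA := Finset.sum_nonneg fun i _ => hpos i
  have hSBpos : 0 ≤ SB := Finset.sum_nonneg fun i _ => hpos i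
  have hSDpos : 0 ≤ SD := Finset.sum_nonneg fun i _ => hpos i
  have hSEpos : 0 ≤ SE := Finset.sum_nonneg fun i _ => hpos i
  rw [hsum]
  nlinarith [mul_le_mul_of_nonneg_left hcone' ht, mul_nonneg (mul_nonneg hC.le ht) hSDpos]
end
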